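/- Let G = (V,E) be a finite undirected graph, let γ > 0, let P be a partition of V, and let S ⊆ C ∈ P be a minimal non-optimal subset. Then {S} is an optimal partition of the subgraph of G induced by S: for every partition of S into two nonempty sets S_1 and S_2, one has E(S_1,S_2) ≥ γ·|S_1|·|S_2|. -/
import Mathlib


open Finset

variable {V : Type*}

/-- `eBetween G S T` is the number of adjacent pairs `(u, v)` with `u ∈ S` and `v ∈ T`.
For disjoint `S` and `T` this is the number of edges between `S` and `T`. -/
noncomputable def eBetween (G : SimpleGraph V) [DecidableRel G.Adj] (S T : Finset V) : ℝ :=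
  ∑ u ∈ S, ∑ v ∈ T, if G.Adj u v then (1 : ℝ) else 0

/-- `P` is a partition of `V` into nonempty communities. -/
def IsPartition [Fintype V] (P : Finset (Finset V)) : Prop :=
  (∀ C ∈ P, C.Nonempty) ∧ ∀ v : V, ∃! C, C ∈ P ∧ v ∈ C

/-- The change in the CPM quality function obtained by moving the set `S ⊆ C` to the
community `D`:
`ΔH(S ↦ D) = (E(S,D) − γ·|S|·|D|) − (E(S, C−S) − γ·|S|·|C−S|)`. -/
noncomputable def deltaH [DecidableEq V] (G : SimpleGraph V) [DecidableRel G.Adj]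
    (γ : ℝ) (C S D : Finset V) : ℝ :=
  (eBetween G S D - γ * (S.card : ℝ) * (D.card : ℝ)) -
    (eBetween G S (C \ S) - γ * (S.card : ℝ) * (((C \ S).card : ℝ)))

/-- `S ⊆ C ∈ P` is a non-optimal subset if `ΔH(S ↦ D) > 0` for some community `D ∈ P`
(with `D ≠ C`) or for `D = ∅`. -/
def NonOptimalSubset [Fintype V] [DecidableEq V] (G : SimpleGraph V) [DecidableRel G.Adj]
    (γ : ℝ) (P : Finset (Finset V)) (C S : Finset V) : Prop :=
  ∃ D : Finset V, ((D ∈ P ∧ D ≠ C) ∨ D = ∅) ∧ 0 < deltaH G γ C S D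

lemma eBetween_union_right [DecidableEq V] (G : SimpleGraph V) [DecidableRel G.Adj] (S A B : Finset V)
    (h : Disjoint A B) : eBetween G S (A ∪ B) = eBetween G S A + eBetween G S B := by
  simp [eBetween, Finset.sum_union h, Finset.sum_add_distrib]

lemma eBetween_union_left [DecidableEq V] (G : SimpleGraph V) [DecidableRel G.Adj] (A B T : Finset V)
    (h : Disjoint A B) : eBetween G (A ∪ B) T = eBetween G A T + eBetween G B T := by
  simp [eBetween, Finset.sum_union h]

lemma eBetween_comm (G : SimpleGraph V) [DecidableRel G.Adj] (A B : Finset V) :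
    eBetween G A B = eBetween G B A := by
  unfold eBetween
  rw [Finset.sum_comm]
  exact Finset.sum_congr rfl fun u _ => Finset.sum_congr rfl fun v _ => if_congr (G.adj_comm v u) rfl rfl

/-- **Lemma (minimal non-optimal subsets are internally optimal).**
If `S ⊆ C ∈ P` is a minimal non-optimal subset, then `{S}` is an optimal partition of the
subgraph induced by `S`: for every partition of `S` into nonempty sets `S₁` and `S₂ = S − S₁`,
`E(S₁,S₂) ≥ γ·|S₁|·|S₂|`. -/
theorem minimal_non_optimal_subset_internally_optimal
    [Fintype V] [DecidableEq V] (G : SimpleGraph V) [DecidableRel G.Adj]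
    (γ : ℝ) (hγ : 0 < γ)
    (P : Finset (Finset V)) (hP : IsPartition P)
    (C S : Finset V) (hC : C ∈ P) (hSC : S ⊆ C)
    (hno : NonOptimalSubset G γ P C S)
    (hmin : ∀ S' : Finset V, S' ⊂ S → ¬ NonOptimalSubset G γ P C S') :
    ∀ S₁ : Finset V, S₁ ⊆ S → S₁.Nonempty → (S \ S₁).Nonempty →
      γ * (S₁.card : ℝ) * (((S \ S₁).card : ℝ)) ≤ eBetween G S₁ (S \ S₁) := by
  intro S₁ hS₁S h1 h2
  set S₂ := S \ S₁ with hS₂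
  obtain ⟨D, hD, hpos⟩ := hno
  have hsub1 : S₁ ⊂ S := by
    obtain ⟨x, hx⟩ := h2
    rw [Finset.mem_sdiff] at hx
    exact (Finset.ssubset_iff_of_subset hS₁S).mpr ⟨x, hx.1, hx.2⟩
  have hsub2 : S₂ ⊂ S := Finset.sdiff_ssubset hS₁S h1
  have le1 : deltaH G γ C S₁ D ≤ 0 := by
    by_contra h
    exact hmin S₁ hsub1 ⟨D, hD, lt_of_not_ge h⟩
  have le2 : deltaH G γ C S₂ D ≤ 0 := by
    by_contra h
    exact hmin S₂ hsub2 ⟨D, hD, lt_of_not_ge h⟩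
  have hdisj12 : Disjoint S₁ S₂ := Finset.disjoint_sdiff
  have hSeq : S = S₁ ∪ S₂ := (Finset.union_sdiff_of_subset hS₁S).symm
  have hS₂C : S₂ ⊆ C := (Finset.sdiff_subset).trans hSC
  have hCS1 : C \ S₁ = (C \ S) ∪ S₂ := by
    ext v
    simp only [Finset.mem_sdiff, Finset.mem_union, hS₂]
    constructor
    · rintro ⟨hv, hv1⟩
      by_cases hvS : v ∈ S
      · exact Or.inr ⟨hvS, hv1⟩
      · exact Or.inl ⟨hv, hvS⟩
    · rintro (⟨hv, hvS⟩ | ⟨hvS, hv1⟩)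
      · exact ⟨hv, fun h => hvS (hS₁S h)⟩
      · exact ⟨hSC hvS, hv1⟩
  have hCS2 : C \ S₂ = (C \ S) ∪ S₁ := by
    ext v
    simp only [Finset.mem_sdiff, Finset.mem_union, hS₂]
    constructor
    · rintro ⟨hv, hv2⟩
      by_cases hvS : v ∈ S
      · refine Or.inr ?_
        by_contra h; exact hv2 ⟨hvS, h⟩
      · exact Or.inl ⟨hv, hvS⟩
    · rintro (⟨hv, hvS⟩ | hv1)
      · exact ⟨hv, fun h => hvS h.1⟩
      · exact ⟨hSC (hS₁S hv1), fun h => h.2 hv1⟩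
  have hd1 : Disjoint (C \ S) S₂ :=
    Finset.disjoint_left.mpr fun v hv hv2 => (Finset.mem_sdiff.mp hv).2 (Finset.mem_sdiff.mp hv2).1
  have hd2 : Disjoint (C \ S) S₁ :=
    Finset.disjoint_left.mpr fun v hv hv1 => (Finset.mem_sdiff.mp hv).2 (hS₁S hv1)
  -- eBetween expansions
  have e1 : eBetween G S D = eBetween G S₁ D + eBetween G S₂ D := by
    rw [hSeq, eBetween_union_left G _ _ _ hdisj12]
  have e2 : eBetween G S (C \ S) = eBetween G S₁ (C \ S) + eBetween G S₂ (C \ S) := by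
    rw [hSeq, eBetween_union_left G _ _ _ hdisj12]
  have e3 : eBetween G S₁ (C \ S₁) = eBetween G S₁ (C \ S) + eBetween G S₁ S₂ := by
    rw [hCS1, eBetween_union_right G _ _ _ hd1]
  have e4 : eBetween G S₂ (C \ S₂) = eBetween G S₂ (C \ S) + eBetween G S₂ S₁ := by
    rw [hCS2, eBetween_union_right G _ _ _ hd2]
  have e5 : eBetween G S₂ S₁ = eBetween G S₁ S₂ := eBetween_comm G _ _
  -- cards
  have c1 : (S.card : ℝ) = S₁.card + S₂.card := by
    rw [hSeq, Finset.card_union_of_disjoint hdisj12]; push_cast; ring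
  have c2 : ((C \ S₁).card : ℝ) = (C \ S).card + S₂.card := by
    rw [hCS1, Finset.card_union_of_disjoint hd1]; push_cast; ring
  have c3 : ((C \ S₂).card : ℝ) = (C \ S).card + S₁.card := by
    rw [hCS2, Finset.card_union_of_disjoint hd2]; push_cast; ring
  have key : deltaH G γ C S D =
      deltaH G γ C S₁ D + deltaH G γ C S₂ D + 2 * eBetween G S₁ S₂
        - 2 * (γ * S₁.card * S₂.card) := by
    unfold deltaH
    rw [e1, e2, e3, e4, e5, c1, c2, c3]
    ring
  nlinarith [hpos, le1, le2, key]
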